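/- arXiv:0901.4092 — 8 statements merged into one kernel-verified Lean document; each statement's English description precedes it below -/
import Mathlib

section
/- The equivalence relation E_0^ω on (2^ω)^ω, defined by (x_n) E_0^ω (y_n) iff for every n the sequences x_n and y_n eventually agree, is Borel reducible to the equivalence relation =⁺ on (2^ω)^ω of coding the same countable set, i.e., (x_n) =⁺ (y_n) iff {x_n : n ∈ ω} = {y_n : n ∈ ω}. -/
/-!
Let `reduction x` enumerate the countable set of all sequences `tag n w` with `w E₀ xₙ`, where
`tag` injectively encodes the pair `(n, w)` in one binary sequence. Its range then records the
`E₀`-class of each `xₙ` separately, so `reduction x` and `reduction y` have the same range exactly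
when every `xₙ` and `yₙ` have the same `E₀`-class. An `E₀`-class is enumerated uniformly by
flipping `xₙ` on the finite sets `s ⊆ ℕ`, which makes every bit of `reduction x` a function of a
single bit of `x`.
-/

/-- `E₀` on Cantor space: eventual agreement. -/
def E0rel (x y : ℕ → Bool) : Prop := ∃ m, ∀ n ≥ m, x n = y n

open Filter Set

theorem E0rel_iff_eventuallyEq {x y : ℕ → Bool} : E0rel x y ↔ x =ᶠ[atTop] y :=
  eventually_atTop.symm

def flipOn (s : Finset ℕ) (z : ℕ → Bool) : ℕ → Bool :=
  fun k => if k ∈ s then !z k else z k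

theorem E0rel_iff_exists_flipOn {w z : ℕ → Bool} : E0rel w z ↔ ∃ s : Finset ℕ, w = flipOn s z := by
  constructor
  · rintro ⟨m, hm⟩
    refine ⟨(Finset.range m).filter (fun k => w k ≠ z k), funext fun k => ?_⟩
    by_cases hk : k < m
    · cases hw : w k <;> cases hz : z k <;> simp [flipOn, hk, hw, hz]
    · simp [flipOn, hk, hm k (not_lt.1 hk)]
  · rintro ⟨s, rfl⟩
    obtain ⟨m, hm⟩ := s.exists_nat_subset_range
    exact ⟨m, fun k hk => if_neg fun hs => (Finset.mem_range.1 (hm hs)).not_ge hk⟩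

def tag (n : ℕ) (z : ℕ → Bool) : ℕ → Bool :=
  fun k => if k % 2 = 0 then decide (k / 2 = n) else z (k / 2)

theorem tag_injective : Function.Injective (fun p : ℕ × (ℕ → Bool) => tag p.1 p.2) := by
  rintro ⟨n, z⟩ ⟨n', z'⟩ h
  have hn : n = n' := by simpa [tag] using congrFun h (2 * n)
  have hz : z = z' := funext fun k => by
    have hk : (2 * k + 1) / 2 = k := by omega
    simpa [tag, Nat.add_mod, hk] using congrFun h (2 * k + 1)
  rw [hn, hz]

noncomputable def reduction (x : ℕ → ℕ → Bool) : ℕ → ℕ → Bool :=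
  fun m => let p := Denumerable.ofNat (ℕ × Finset ℕ) m; tag p.1 (flipOn p.2 (x p.1))

theorem measurable_reduction : Measurable reduction := by
  refine measurable_pi_lambda _ fun m => measurable_pi_lambda _ fun k => ?_
  simp only [reduction, tag, flipOn]
  split_ifs <;> fun_prop

theorem range_reduction (x : ℕ → ℕ → Bool) :
    range (reduction x) = (fun p : ℕ × (ℕ → Bool) => tag p.1 p.2) '' {p | E0rel p.2 (x p.1)} := by
  have he : Function.Surjective (Denumerable.ofNat (ℕ × Finset ℕ)) :=
    fun p => ⟨_, Denumerable.ofNat_encode p⟩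
  change range ((fun p : ℕ × Finset ℕ => tag p.1 (flipOn p.2 (x p.1))) ∘ Denumerable.ofNat _) = _
  rw [he.range_comp]
  ext v
  simp only [mem_range, mem_image, mem_ofPred_eq, E0rel_iff_exists_flipOn, Prod.exists]
  constructor
  · rintro ⟨n, s, rfl⟩
    exact ⟨n, _, ⟨s, rfl⟩, rfl⟩
  · rintro ⟨n, _, ⟨s, rfl⟩, rfl⟩
    exact ⟨n, s, rfl⟩

/-- `E₀^ω` on `(2^ω)^ω` is Borel reducible to `=⁺`, the relation of coding
the same countable set. -/
theorem E0omega_reducible_to_eqPlus :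
    ∃ f : (ℕ → ℕ → Bool) → (ℕ → ℕ → Bool), Measurable f ∧
      ∀ x y : ℕ → ℕ → Bool,
        (∀ n, E0rel (x n) (y n)) ↔ Set.range (f x) = Set.range (f y) := by
  refine ⟨reduction, measurable_reduction, fun x y => ?_⟩
  rw [range_reduction, range_reduction, tag_injective.image_injective.eq_iff]
  simp only [E0rel_iff_eventuallyEq, Set.ext_iff, mem_ofPred_eq, Prod.forall]
  exact ⟨fun h n w => (h n).congr_right, fun h n => (h n (x n)).1 (EventuallyEq.refl _ _)⟩
end

section
/- E_0^ω is not Borel reducible to any Σ⁰₃ equivalence relation on a Polish space. -/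
/-- A set is `Σ⁰₃` if it is a countable union of `Gδ` sets. -/
def IsSigma03 {X : Type*} [TopologicalSpace X] (A : Set X) : Prop :=
  ∃ U : ℕ → ℕ → Set X, (∀ n m, IsOpen (U n m)) ∧ A = ⋃ n, ⋂ m, U n m

/-!
Suppose `f` reduces `E₀^ω` to `E = ⋃ₖ ⋂ₘ Wₖₘ` with `Wₖₘ` open. Then `f` is continuous on a
dense `Gδ` set `D`. The `E₀^ω`-class of a point `x` is parametrized by Baire space: `g : ℕ → ℕ`
flips column `a` of `x` on the finite set coded by `g a`. For generic `x`, comeagre many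
parameters land in `D`, and all of them are sent `E`-equivalent to `f x`; so for some `k` the
`Gδ` set `Hₖ = {y ∈ D | ∀ m, (f y, f x) ∈ Wₖₘ}` is hit by a non-meagre, hence somewhere dense,
set of parameters. A basic open set of parameters leaves some column `c` unconstrained. Letting
column `c` range over all of `ℕ → Bool`, the Baire category theorem produces `y ∈ Hₖ` whose
column `c` differs from that of `x` infinitely often: `f y` is `E`-equivalent to `f x`, but `y`
is not `E₀^ω`-equivalent to `x`.
-/

open Set Filter Topology TopologicalSpace PiNat Function Denumerable

theorem Measurable.exists_mem_residual_continuousOn {α β : Type*} [TopologicalSpace α]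
    [MeasurableSpace α] [BorelSpace α] [TopologicalSpace β] [SecondCountableTopology β]
    [MeasurableSpace β] [OpensMeasurableSpace β] {f : α → β} (hf : Measurable f) :
    ∃ D ∈ residual α, ContinuousOn f D := by
  have hopen (b : countableBasis β) : ∃ u : Set α, IsOpen u ∧ f ⁻¹' b =ᵇ u :=
    (hf (isOpen_of_mem_countableBasis b.2).measurableSet).residualEq_isOpen
  choose u hu hfu using hopen
  refine ⟨⋂ b : countableBasis β, {x | x ∈ f ⁻¹' b ↔ x ∈ u b},
    countable_iInter_mem.2 fun b => eventuallyEq_set.1 (hfu b), fun x hx => ?_⟩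
  rw [ContinuousWithinAt, tendsto_def]
  intro s hs
  obtain ⟨b, hb, hfx, hbs⟩ := (isBasis_countableBasis β).mem_nhds_iff.1 hs
  have hxb : x ∈ u ⟨b, hb⟩ := (mem_iInter.1 hx ⟨b, hb⟩).1 hfx
  refine mem_nhdsWithin.2 ⟨u ⟨b, hb⟩, hu _, hxb, fun y ⟨hyu, hyD⟩ => hbs ?_⟩
  exact (mem_iInter.1 hyD ⟨b, hb⟩).2 hyu

theorem ContinuousOn.isGδ_inter_preimage {α β : Type*} [TopologicalSpace α]
    [TopologicalSpace β] {f : α → β} {D : Set α} {B : Set β} (hf : ContinuousOn f D)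
    (hD : IsGδ D) (hB : IsGδ B) : IsGδ (D ∩ f ⁻¹' B) := by
  obtain ⟨O, hO, rfl⟩ := isGδ_iff_eq_iInter_nat.1 hB
  choose V hV hfV using fun n => continuousOn_iff'.1 hf (O n) (hO n)
  have : D ∩ f ⁻¹' ⋂ n, O n = D ∩ ⋂ n, V n := by
    ext x
    simp only [mem_inter_iff, preimage_iInter, mem_iInter]
    refine and_congr_right fun hx => forall_congr' fun n => ?_
    simpa [hx] using congrArg (x ∈ ·) (hfV n)
  rw [this]
  exact hD.inter (.iInter_of_isOpen hV)

theorem nonempty_inter_of_subset_closure {α : Type*} [TopologicalSpace α] [BaireSpace α]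
    {U s t : Set α} (hU : IsOpen U) (hne : U.Nonempty) (hUs : U ⊆ closure s) (hs : IsGδ s)
    (ht : t ∈ residual α) : (U ∩ s ∩ t).Nonempty := by
  have hdense : Dense (s ∪ (closure U)ᶜ) := by
    refine dense_iff_closure_eq.2 (eq_univ_of_forall fun x => ?_)
    by_cases hx : x ∈ closure U
    · exact closure_mono subset_union_left (closure_minimal hUs isClosed_closure hx)
    · exact subset_closure (Or.inr hx)
  have hres : s ∪ (closure U)ᶜ ∈ residual α :=
    residual_of_dense_Gδ (hs.union isClosed_closure.isOpen_compl.isGδ) hdense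
  obtain ⟨x, hxU, hxs | hxU', hxt⟩ :=
    (dense_of_mem_residual (inter_mem hres ht)).inter_open_nonempty U hU hne
  · exact ⟨x, ⟨hxU, hxs⟩, hxt⟩
  · exact absurd (subset_closure hxU) hxU'

theorem PiNat.exists_cylinder_subset_of_mem_nhds {E : ℕ → Type*}
    [∀ n, TopologicalSpace (E n)] [∀ n, DiscreteTopology (E n)] {x : ∀ n, E n}
    {u : Set (∀ n, E n)} (hu : u ∈ 𝓝 x) : ∃ n, cylinder x n ⊆ u := by
  obtain ⟨_, ⟨y, n, rfl⟩, hx, hsub⟩ := (isTopologicalBasis_cylinders E).mem_nhds_iff.1 hu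
  exact ⟨n, by rwa [mem_cylinder_iff_eq.1 hx]⟩

lemma E0rel_xor_iff {u p : ℕ → Bool} :
    E0rel u (fun b => xor (p b) (u b)) ↔ ∀ᶠ b in atTop, p b = false := by
  simp only [E0rel, eventually_atTop]
  refine exists_congr fun m => forall₂_congr fun b _ => ?_
  cases p b <;> cases u b <;> decide

lemma setOf_frequently_true_mem_residual :
    {s : ℕ → Bool | ∃ᶠ b in atTop, s b = true} ∈ residual (ℕ → Bool) := by
  have : {s : ℕ → Bool | ∃ᶠ b in atTop, s b = true} =
      ⋂ N, ⋃ b ≥ N, (fun s => s b) ⁻¹' {true} := by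
    ext s
    simp [frequently_atTop]
  rw [this]
  refine countable_iInter_mem.2 fun N => residual_of_dense_open ?_ ?_
  · exact isOpen_biUnion fun b _ => (isOpen_discrete {true}).preimage (continuous_apply b)
  · refine dense_iff_inter_open.2 fun U hU ⟨s, hs⟩ => ?_
    obtain ⟨n, hn⟩ := exists_cylinder_subset_of_mem_nhds (hU.mem_nhds hs)
    refine ⟨update s (max N n) true, hn fun i hi => ?_,
      mem_iUnion₂.2 ⟨max N n, le_max_left _ _, by simp⟩⟩
    exact update_of_ne (by omega) _ _

def flipBits (p x : ℕ → ℕ → Bool) : ℕ → ℕ → Bool := fun a b => xor (p a b) (x a b)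

def finPattern (g : ℕ → ℕ) : ℕ → ℕ → Bool := fun a b => decide (b ∈ ofNat (Finset ℕ) (g a))

@[fun_prop]
lemma Continuous.flipBits {α : Type*} [TopologicalSpace α] {p x : α → ℕ → ℕ → Bool}
    (hp : Continuous p) (hx : Continuous x) : Continuous fun z => flipBits (p z) (x z) :=
  continuous_pi fun a => continuous_pi fun b =>
    (continuous_of_discreteTopology (f := fun v : Bool × Bool => xor v.1 v.2)).comp
      (Continuous.prodMk (by fun_prop) (by fun_prop))

@[fun_prop]
lemma continuous_finPattern : Continuous finPattern :=
  continuous_pi fun a =>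
    (continuous_of_discreteTopology (f := fun k b => decide (b ∈ ofNat (Finset ℕ) k))).comp
      (continuous_apply a)

lemma flipBits_involutive (p : ℕ → ℕ → Bool) : Involutive (flipBits p) := by
  intro x
  funext a b
  simp [flipBits]

lemma isOpenMap_flipBits (p : ℕ → ℕ → Bool) : IsOpenMap (flipBits p) := fun U hU => by
  rw [(flipBits_involutive p).image_eq_preimage_symm]
  exact hU.preimage (by fun_prop)

lemma E0rel_flipBits_finPattern (x : ℕ → ℕ → Bool) (g : ℕ → ℕ) (a : ℕ) :
    E0rel (x a) (flipBits (finPattern g) x a) := by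
  refine E0rel_xor_iff.2 ?_
  obtain ⟨m, hm⟩ := (ofNat (Finset ℕ) (g a)).bddAbove
  filter_upwards [eventually_gt_atTop m] with b hb
  simpa [finPattern] using fun hbF => (hm hbF).not_gt hb

/-- `x` only has to be generic over the translates by `finPattern t`, `t` in a countable dense
set of parameters; these translates are homeomorphisms, so they preserve residual sets. -/
theorem exists_setOf_flipBits_finPattern_mem_residual {D : Set (ℕ → ℕ → Bool)} (hD : IsGδ D)
    (hd : Dense D) : ∃ x, {g : ℕ → ℕ | flipBits (finPattern g) x ∈ D} ∈ residual (ℕ → ℕ) := by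
  obtain ⟨T, hTc, hTd⟩ := exists_countable_dense (ℕ → ℕ)
  have hres : (⋂ t ∈ T, flipBits (finPattern t) ⁻¹' D) ∈ residual (ℕ → ℕ → Bool) :=
    (countable_bInter_mem hTc).2 fun t _ => tendsto_residual_of_isOpenMap (by fun_prop)
      (isOpenMap_flipBits _) (residual_of_dense_Gδ hD hd)
  obtain ⟨x, hx⟩ := (dense_of_mem_residual hres).nonempty
  refine ⟨x, residual_of_dense_Gδ (hD.preimage (by fun_prop)) (hTd.mono fun t ht => ?_)⟩
  exact mem_iInter₂.1 hx t ht

section FreeColumn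

variable {x : ℕ → ℕ → Bool} {H : Set (ℕ → ℕ → Bool)}

/-- `(g, s)` is approximated by parameters whose column `c` is a finite truncation of `s`, and
these come from plain parameters with that truncation coded into column `c`. -/
lemma cylinder_prod_univ_subset_closure {g₀ : ℕ → ℕ} {c : ℕ}
    (h : cylinder g₀ c ⊆ closure {g | flipBits (finPattern g) x ∈ H}) :
    cylinder g₀ c ×ˢ univ ⊆
      closure {q : (ℕ → ℕ) × (ℕ → Bool) | flipBits (update (finPattern q.1) c q.2) x ∈ H} := by
  rintro ⟨g, s⟩ ⟨hg, -⟩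
  refine mem_closure_iff_nhds.2 fun O hO => ?_
  obtain ⟨u, hu, v, hv, huv⟩ := mem_nhds_prod_iff.1 hO
  obtain ⟨J, hJ⟩ := exists_cylinder_subset_of_mem_nhds hu
  obtain ⟨N, hN⟩ := exists_cylinder_subset_of_mem_nhds hv
  obtain ⟨k, hk⟩ : ∃ k, ofNat (Finset ℕ) k = (Finset.range N).filter fun b => s b :=
    ⟨_, ofNat_encode _⟩
  have hg' : update g c k ∈ closure {g | flipBits (finPattern g) x ∈ H} :=
    h fun i hi => by rw [update_of_ne hi.ne]; exact hg i hi
  obtain ⟨g₁, hg₁, hg₁H⟩ := mem_closure_iff_nhds.1 hg' _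
    ((isOpen_cylinder _ _ _).mem_nhds (self_mem_cylinder _ (max J (c + 1))))
  have hg₁c : g₁ c = k := by simpa using hg₁ c (by omega)
  refine ⟨(update g₁ c (g c), finPattern g₁ c), huv ⟨hJ fun i hi => ?_, hN fun b hb => ?_⟩, ?_⟩
  · rcases eq_or_ne i c with rfl | hic
    · simp
    · show update g₁ c (g c) i = g i
      rw [update_of_ne hic, hg₁ i (by omega), update_of_ne hic]
  · simp [finPattern, hg₁c, hk, hb]
  · have : update (finPattern (update g₁ c (g c))) c (finPattern g₁ c) = finPattern g₁ := by
      funext a b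
      rcases eq_or_ne a c with rfl | hac
      · simp
      · simp [finPattern, hac]
    simpa [this] using hg₁H

theorem exists_mem_not_E0rel_of_not_isMeagre (hH : IsGδ H)
    (hx : ¬ IsMeagre {g : ℕ → ℕ | flipBits (finPattern g) x ∈ H}) :
    ∃ y ∈ H, ∃ c, ¬ E0rel (x c) (y c) := by
  obtain ⟨g₀, hg₀⟩ : (interior (closure {g | flipBits (finPattern g) x ∈ H})).Nonempty :=
    nonempty_iff_ne_empty.2 fun h => hx (IsNowhereDense.isMeagre h)
  obtain ⟨c, hc⟩ := exists_cylinder_subset_of_mem_nhds (isOpen_interior.mem_nhds hg₀)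
  have hne : (cylinder g₀ c ×ˢ (univ : Set (ℕ → Bool))).Nonempty :=
    ⟨(g₀, fun _ => true), self_mem_cylinder _ _, trivial⟩
  have hinf : Prod.snd ⁻¹' {s : ℕ → Bool | ∃ᶠ b in atTop, s b = true} ∈
      residual ((ℕ → ℕ) × (ℕ → Bool)) :=
    tendsto_residual_of_isOpenMap continuous_snd isOpenMap_snd setOf_frequently_true_mem_residual
  obtain ⟨⟨g, s⟩, ⟨-, hgs⟩, hs⟩ := nonempty_inter_of_subset_closure
    ((isOpen_cylinder _ g₀ c).prod isOpen_univ) hne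
    (cylinder_prod_univ_subset_closure (hc.trans interior_subset)) (hH.preimage (by fun_prop)) hinf
  refine ⟨_, hgs, c, fun hE0 => ?_⟩
  have hcol : flipBits (update (finPattern g) c s) x c = fun b => xor (s b) (x c b) := by
    funext b
    simp [flipBits]
  have hfalse : ∀ᶠ b in atTop, s b = false := E0rel_xor_iff.1 (hcol ▸ hE0)
  obtain ⟨b, hb, hb'⟩ := (hs.and_eventually hfalse).exists
  exact Bool.false_ne_true (hb' ▸ hb)

end FreeColumn

/-- `E₀^ω` is not Borel reducible to any `Σ⁰₃` equivalence relation on a Polish space. -/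
theorem E0omega_not_reducible_to_Sigma03
    (X : Type*) [TopologicalSpace X] [PolishSpace X] [MeasurableSpace X] [BorelSpace X]
    (E : X → X → Prop) (hE : Equivalence E)
    (hE3 : IsSigma03 {p : X × X | E p.1 p.2}) :
    ¬ ∃ f : (ℕ → ℕ → Bool) → X, Measurable f ∧
        ∀ x y : ℕ → ℕ → Bool, (∀ n, E0rel (x n) (y n)) ↔ E (f x) (f y) := by
  rintro ⟨f, hf, hred⟩
  obtain ⟨W, hWopen, hEW⟩ := hE3
  have hE_iff {u v : X} : E u v ↔ ∃ k, ∀ m, (u, v) ∈ W k m := by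
    rw [show E u v ↔ (u, v) ∈ {p : X × X | E p.1 p.2} from Iff.rfl, hEW]
    simp
  obtain ⟨D', hD', hfD'⟩ := hf.exists_mem_residual_continuousOn
  obtain ⟨D, hDD', hDGδ, hDdense⟩ := mem_residual.1 hD'
  obtain ⟨x, hx⟩ := exists_setOf_flipBits_finPattern_mem_residual hDGδ hDdense
  let H (k : ℕ) := D ∩ f ⁻¹' ⋂ m, (·, f x) ⁻¹' W k m
  have hH (k : ℕ) : IsGδ (H k) := (hfD'.mono hDD').isGδ_inter_preimage hDGδ <|
    .iInter_of_isOpen fun m => (hWopen k m).preimage (by fun_prop)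
  have hcover : {g | flipBits (finPattern g) x ∈ D} ⊆
      ⋃ k, {g | flipBits (finPattern g) x ∈ H k} := by
    intro g hg
    obtain ⟨k, hk⟩ := hE_iff.1 (hE.symm ((hred _ _).1 (E0rel_flipBits_finPattern x g)))
    exact mem_iUnion.2 ⟨k, hg, mem_iInter.2 hk⟩
  obtain ⟨k, hk⟩ : ∃ k, ¬ IsMeagre {g | flipBits (finPattern g) x ∈ H k} := by
    by_contra! h
    exact not_isMeagre_of_mem_residual hx ((isMeagre_iUnion h).mono hcover)
  obtain ⟨y, ⟨-, hy⟩, c, hc⟩ := exists_mem_not_E0rel_of_not_isMeagre (hH k) hk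
  exact hc ((hred x y).2 (hE.symm (hE_iff.2 ⟨k, fun m => mem_iInter.1 hy m⟩)) c)
end

section
/- For any unbounded increasing sequence b⃗ = (b(n)) of positive reals, the equivalence relation ℓ_∞ on ℝ^ω (defined by x⃗ E y⃗ iff sup_n |x(n)−y(n)| < ∞) is Borel reducible to its restriction to the compact set Π_n [0, b(n)]. -/
/-!
Enumerate `ℕ × ℤ` so that every pair `(k, j)` recurs at arbitrarily large coordinates `n`, and
send `x` to the sequence whose `n`-th entry is `x k - j` clipped to `[0, b n]`. Clipping is
`1`-Lipschitz, so `ℓ_∞`-equivalent inputs stay equivalent. Conversely, if `y k - x k` is huge,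
take `j = ⌈x k⌉` and a coordinate `n` carrying `(k, j)` with `b n` large: there `x` is clipped
to `0` while `y` is clipped to something large.
-/

open Set

namespace LinftyReduction

/-- Only the first unpaired component is decoded, so every pair recurs at arbitrarily large `n`. -/
def code (n : ℕ) : ℕ × ℤ := Denumerable.ofNat (ℕ × ℤ) n.unpair.1

lemma exists_code_eq_lt {b : ℕ → ℝ} (hmono : Monotone b) (hunb : ∀ C : ℝ, ∃ n, C < b n)
    (p : ℕ × ℤ) (C : ℝ) : ∃ n, code n = p ∧ C < b n := by
  obtain ⟨N, hN⟩ := hunb C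
  refine ⟨Nat.pair (Encodable.encode p) N, ?_, hN.trans_le (hmono (Nat.right_le_pair _ _))⟩
  simp only [code, Nat.unpair_pair, Denumerable.ofNat_encode]

noncomputable def clip (b : ℕ → ℝ) (hb : ∀ n, 0 ≤ b n) (x : ℕ → ℝ) (n : ℕ) : ℝ :=
  projIcc 0 (b n) (hb n) (x (code n).1 - (code n).2)

variable {b : ℕ → ℝ} {hb : ∀ n, 0 ≤ b n}

lemma measurable_clip : Measurable (clip b hb) :=
  measurable_pi_lambda _ fun _ =>
    (continuous_subtype_val.comp continuous_projIcc).measurable.comp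
      ((measurable_pi_apply _).sub_const _)

lemma clip_mem_Icc (x : ℕ → ℝ) (n : ℕ) : clip b hb x n ∈ Icc 0 (b n) :=
  Subtype.prop _

lemma abs_clip_sub_clip_le (x y : ℕ → ℝ) (n : ℕ) :
    |clip b hb x n - clip b hb y n| ≤ |x (code n).1 - y (code n).1| :=
  (abs_projIcc_sub_projIcc _).trans_eq (by ring_nf)

lemma sub_lt_of_abs_clip_sub_clip_lt (hmono : Monotone b) (hunb : ∀ C : ℝ, ∃ n, C < b n)
    {x y : ℕ → ℝ} {C : ℝ} (hC : ∀ n, |clip b hb y n - clip b hb x n| < C) (k : ℕ) :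
    y k - x k < C + 1 := by
  by_contra! hk
  have hC0 : 0 ≤ C := (abs_nonneg _).trans (hC 0).le
  obtain ⟨n, hn, hbn⟩ := exists_code_eq_lt hmono hunb (k, ⌈x k⌉) C
  have hx : clip b hb x n = 0 := by
    rw [clip, hn, projIcc_of_le_left _ (sub_nonpos.2 (Int.le_ceil _))]
  have hy : C ≤ clip b hb y n := by
    have hj : (⌈x k⌉ : ℝ) < x k + 1 := Int.ceil_lt_add_one _
    have hle := monotone_projIcc (hb n) (show C ≤ y k - ⌈x k⌉ by linarith)
    rw [projIcc_of_mem _ ⟨hC0, hbn.le⟩] at hle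
    rw [clip, hn]
    exact hle
  have := hC n
  rw [hx, sub_zero, abs_of_nonneg (hC0.trans hy)] at this
  linarith

end LinftyReduction

open LinftyReduction in
/-- For any unbounded increasing sequence `b` of positive reals, the `ℓ_∞` equivalence
relation on `ℝ^ω` is Borel reducible to its restriction to `Π_n [0, b(n)]`. -/
theorem linfty_reducible_to_restriction
    (b : ℕ → ℝ) (hpos : ∀ n, 0 < b n) (hmono : StrictMono b)
    (hunb : ∀ C : ℝ, ∃ n, C < b n) :
    ∃ f : (ℕ → ℝ) → (ℕ → ℝ), Measurable f ∧
      (∀ x n, f x n ∈ Set.Icc 0 (b n)) ∧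
      ∀ x y : ℕ → ℝ,
        (∃ C : ℝ, ∀ n, |x n - y n| < C) ↔ (∃ C : ℝ, ∀ n, |f x n - f y n| < C) := by
  have hb : ∀ n, 0 ≤ b n := fun n => (hpos n).le
  refine ⟨clip b hb, measurable_clip, clip_mem_Icc, fun x y => ⟨?_, ?_⟩⟩
  · rintro ⟨C, hC⟩
    exact ⟨C, fun n => (abs_clip_sub_clip_le x y n).trans_lt (hC _)⟩
  · rintro ⟨C, hC⟩
    refine ⟨C + 1, fun k => abs_sub_lt_iff.2 ⟨?_, ?_⟩⟩
    · exact sub_lt_of_abs_clip_sub_clip_lt hmono.monotone hunb hC k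
    · exact sub_lt_of_abs_clip_sub_clip_lt hmono.monotone hunb
        (fun n => abs_sub_comm (clip b hb x n) _ ▸ hC n) k
end

section
/- Let (X,d) be a Polish metric space and F_X the equivalence relation on X^ω defined by x⃗ F_X y⃗ iff there is C > 0 such that every x(i) is within distance C of some y(j) and every y(i) is within distance C of some x(j). Then F_X is Borel reducible to the equivalence relation ℓ_∞ on ℝ^ω. -/
/-!
Send a sequence `x` to the distances `infDist (u n) (range x)` from its range to the points
`u n` of a dense sequence. If the ranges of `x` and `y` lie within `C` of each other, these
distances differ by at most `C`, by the triangle inequality. Conversely, if they differ by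
at most `C` everywhere, then testing at a point `u n` close to `x i` finds a point of the range
of `y` within about `C` of `x i`, and symmetrically.
-/

open Metric Set TopologicalSpace

section

variable {X : Type*} [MetricSpace X] {ι κ : Type*}

theorem infDist_range_le_infDist_range_add [Nonempty κ] {x : ι → X} {y : κ → X} {C : ℝ}
    (h : ∀ k, ∃ i, dist (y k) (x i) ≤ C) (q : X) :
    infDist q (range x) ≤ infDist q (range y) + C := by
  rw [← sub_le_iff_le_add, le_infDist (range_nonempty y)]
  rintro _ ⟨k, rfl⟩
  obtain ⟨i, hi⟩ := h k
  have := infDist_le_dist_of_mem (x := q) (mem_range_self (f := x) i)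
  linarith [dist_triangle q (y k) (x i)]

theorem exists_dist_lt_of_infDist_range_le [Nonempty κ] {ν : Type*} {u : ν → X}
    (hu : DenseRange u) {x : ι → X} {y : κ → X} {C : ℝ}
    (h : ∀ n, infDist (u n) (range y) ≤ infDist (u n) (range x) + C) (i : ι) {ε : ℝ}
    (hε : 0 < ε) : ∃ j, dist (x i) (y j) < C + ε := by
  obtain ⟨n, hn⟩ := Metric.denseRange_iff.mp hu (x i) (ε / 2) (half_pos hε)
  have hx : infDist (u n) (range x) ≤ dist (u n) (x i) := infDist_le_dist_of_mem ⟨i, rfl⟩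
  have hy : infDist (u n) (range y) < C + ε / 2 := by
    linarith [h n, dist_comm (x i) (u n)]
  obtain ⟨_, ⟨j, rfl⟩, hj⟩ := (infDist_lt_iff (range_nonempty y)).mp hy
  exact ⟨j, by linarith [dist_triangle (x i) (u n) (y j)]⟩

theorem measurable_infDist_range [MeasurableSpace X] [OpensMeasurableSpace X] [Countable ι]
    (q : X) : Measurable fun x : ι → X => infDist q (range x) := by
  have hrange (x : ι → X) : infDist q (range x) = (⨅ i, edist q (x i)).toReal := by
    rw [infDist, infEDist, iInf_range]
  simp only [hrange]
  exact ENNReal.measurable_toReal.comp <| Measurable.iInf fun i =>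
    (continuous_const.edist continuous_id).measurable.comp (measurable_pi_apply i)

end

theorem FX_reducible_to_linfty_general
    (X : Type*) [MetricSpace X] [SecondCountableTopology X]
    [MeasurableSpace X] [BorelSpace X] :
    ∃ f : (ℕ → X) → (ℕ → ℝ), Measurable f ∧
      ∀ x y : ℕ → X,
        (∃ C > (0:ℝ), (∀ i, ∃ j, dist (x i) (y j) < C) ∧ (∀ i, ∃ j, dist (y i) (x j) < C))
          ↔ (∃ C : ℝ, ∀ n, |f x n - f y n| < C) := by
  rcases isEmpty_or_nonempty X with hX | hX
  · exact ⟨0, measurable_const, fun x => isEmptyElim (x 0)⟩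
  set u := denseSeq X
  refine ⟨fun x n => infDist (u n) (range x),
    measurable_pi_lambda _ fun n => measurable_infDist_range (u n), fun x y => ⟨?_, ?_⟩⟩
  · rintro ⟨C, -, hxy, hyx⟩
    refine ⟨C + 1, fun n => abs_lt.2 ⟨?_, ?_⟩⟩
    · linarith [infDist_range_le_infDist_range_add (fun i => (hxy i).imp fun _ => le_of_lt) (u n)]
    · linarith [infDist_range_le_infDist_range_add (fun i => (hyx i).imp fun _ => le_of_lt) (u n)]
  · rintro ⟨C, hC⟩
    have hyx n : infDist (u n) (range y) ≤ infDist (u n) (range x) + C := by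
      linarith [(abs_lt.1 (hC n)).1]
    have hxy n : infDist (u n) (range x) ≤ infDist (u n) (range y) + C := by
      linarith [(abs_lt.1 (hC n)).2]
    have hC0 : 0 ≤ C := (abs_nonneg _).trans (hC 0).le
    exact ⟨C + 1, by linarith,
      fun i => exists_dist_lt_of_infDist_range_le (denseRange_denseSeq X) hyx i one_pos,
      fun i => exists_dist_lt_of_infDist_range_le (denseRange_denseSeq X) hxy i one_pos⟩

/-- For a Polish metric space `X`, the relation `F_X` on `X^ω` (boundedly mutually
covering sequences) is Borel reducible to `ℓ_∞` on `ℝ^ω`. -/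
theorem FX_reducible_to_linfty
    (X : Type*) [MetricSpace X] [CompleteSpace X] [SecondCountableTopology X]
    [MeasurableSpace X] [BorelSpace X] :
    ∃ f : (ℕ → X) → (ℕ → ℝ), Measurable f ∧
      ∀ x y : ℕ → X,
        (∃ C > (0:ℝ), (∀ i, ∃ j, dist (x i) (y j) < C) ∧ (∀ i, ∃ j, dist (y i) (x j) < C))
          ↔ (∃ C : ℝ, ∀ n, |f x n - f y n| < C) :=
  FX_reducible_to_linfty_general X
end

section
/- Let (X,d) be a Polish metric space with d unbounded, and let ℓ_∞(X) be the equivalence relation on X^ω defined by x⃗ E y⃗ iff sup_i d(x(i), y(i)) < ∞. Then E_1 ≤_B ℓ_∞(X) ≤_B ℓ_∞, where E_1 is the eventual-agreement relation on (2^ω)^ω and ℓ_∞ is the bounded-difference relation on ℝ^ω. -/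
/-!
Fix a base point `p` and points `q n` with `d(p, q n) ≥ n`. An array `x : ℕ → ℕ → Bool` goes to the
sequence that at position `⟨n, k⟩` sits at `q n` or at `p` according to the bit `x n k`; a
disagreement in row `n` costs distance at least `n`, so bounded distance means eventual agreement of
the rows. In the other direction, `x ↦ (d(x i, z k))_{⟨i, k⟩}` for a dense sequence `z` works
because `d(a, b) = sup_k |d(a, z k) - d(b, z k)|`.
-/

section E1Reduction

variable {X : Type*}

def e1Reduction (p : X) (q : ℕ → X) (x : ℕ → ℕ → Bool) (i : ℕ) : X :=
  cond (x i.unpair.1 i.unpair.2) (q i.unpair.1) p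

theorem measurable_e1Reduction [MeasurableSpace X] (p : X) (q : ℕ → X) :
    Measurable (e1Reduction p q) :=
  measurable_pi_lambda _ fun i =>
    (measurable_of_countable fun b : Bool => cond b (q i.unpair.1) p).comp
      ((measurable_pi_apply _).comp (measurable_pi_apply _))

variable [MetricSpace X]

theorem exists_lt_dist_of_unbounded (hunb : ∀ C : ℝ, ∃ x y : X, C < dist x y) (p : X) (C : ℝ) :
    ∃ y, C < dist p y := by
  obtain ⟨x, y, hxy⟩ := hunb (2 * C)
  by_contra! h
  linarith [dist_triangle_left x y p, h x, h y]

theorem dist_cond_cond (a b : Bool) (p q : X) :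
    dist (cond a q p) (cond b q p) = if a = b then 0 else dist p q := by
  cases a <;> cases b <;> simp [dist_comm]

theorem exists_forall_dist_e1Reduction_lt_iff {p : X} {q : ℕ → X}
    (hq : ∀ n : ℕ, (n : ℝ) ≤ dist p (q n)) (x y : ℕ → ℕ → Bool) :
    (∃ m, ∀ n ≥ m, x n = y n) ↔
      ∃ C : ℝ, ∀ i, dist (e1Reduction p q x i) (e1Reduction p q y i) < C := by
  constructor
  · rintro ⟨m, hm⟩
    refine ⟨∑ n ∈ Finset.range m, dist p (q n) + 1, fun i => ?_⟩
    obtain ⟨n, k, rfl⟩ : ∃ n k, Nat.pair n k = i := ⟨_, _, Nat.pair_unpair i⟩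
    simp only [e1Reduction, Nat.unpair_pair, dist_cond_cond]
    have hsum : 0 ≤ ∑ n ∈ Finset.range m, dist p (q n) :=
      Finset.sum_nonneg fun _ _ => dist_nonneg
    split_ifs with h
    · linarith
    · have hn : n < m := by_contra fun hn => h (congrFun (hm n (not_lt.1 hn)) k)
      linarith [Finset.single_le_sum (fun n _ => dist_nonneg (x := p) (y := q n))
        (Finset.mem_range.2 hn)]
  · rintro ⟨C, hC⟩
    refine ⟨⌈C⌉₊, fun n hn => funext fun k => by_contra fun h => ?_⟩
    have hCn : C ≤ n := (Nat.le_ceil C).trans (Nat.cast_le.2 hn)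
    have := hC (Nat.pair n k)
    simp only [e1Reduction, Nat.unpair_pair, dist_cond_cond, if_neg h] at this
    linarith [hq n]

end E1Reduction

section LinftyReduction

variable {X : Type*} [MetricSpace X]

theorem DenseRange.dist_le_of_forall_abs_dist_sub_le {ι : Type*} {d : ι → X} (hd : DenseRange d)
    {a b : X} {C : ℝ} (h : ∀ k, |dist a (d k) - dist b (d k)| ≤ C) : dist a b ≤ C := by
  have : |dist a b - dist b b| ≤ C :=
    hd.induction_on (p := fun z => |dist a z - dist b z| ≤ C) b
      (isClosed_le (by fun_prop) continuous_const) h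
  simpa using this

def linftyReduction (d : ℕ → X) (x : ℕ → X) (n : ℕ) : ℝ :=
  dist (x n.unpair.1) (d n.unpair.2)

theorem measurable_linftyReduction [MeasurableSpace X] [BorelSpace X] [SecondCountableTopology X]
    (d : ℕ → X) : Measurable (linftyReduction d) :=
  measurable_pi_lambda _ fun _ => (measurable_pi_apply _).dist measurable_const

theorem exists_forall_dist_lt_iff_linftyReduction {d : ℕ → X} (hd : DenseRange d)
    (x y : ℕ → X) :
    (∃ C : ℝ, ∀ i, dist (x i) (y i) < C) ↔
      ∃ C : ℝ, ∀ n, |linftyReduction d x n - linftyReduction d y n| < C := by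
  constructor
  · rintro ⟨C, hC⟩
    exact ⟨C, fun n => (abs_dist_sub_le _ _ _).trans_lt (hC _)⟩
  · rintro ⟨C, hC⟩
    refine ⟨C + 1, fun i => (hd.dist_le_of_forall_abs_dist_sub_le fun k => ?_).trans_lt
      (lt_add_one C)⟩
    simpa [linftyReduction] using (hC (Nat.pair i k)).le

end LinftyReduction

theorem E1_le_linftyX_le_linfty_general
    (X : Type*) [MetricSpace X] [SecondCountableTopology X]
    [MeasurableSpace X] [BorelSpace X]
    (hunb : ∀ C : ℝ, ∃ x y : X, C < dist x y) :
    (∃ τ : (ℕ → ℕ → Bool) → (ℕ → X), Measurable τ ∧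
      ∀ x y : ℕ → ℕ → Bool,
        (∃ m, ∀ n ≥ m, x n = y n) ↔ (∃ C : ℝ, ∀ i, dist (τ x i) (τ y i) < C)) ∧
    (∃ π : (ℕ → X) → (ℕ → ℝ), Measurable π ∧
      ∀ x y : ℕ → X,
        (∃ C : ℝ, ∀ i, dist (x i) (y i) < C) ↔ (∃ C : ℝ, ∀ n, |π x n - π y n| < C)) := by
  obtain ⟨p, -⟩ := hunb 0
  have : Nonempty X := ⟨p⟩
  choose q hq using fun n : ℕ => exists_lt_dist_of_unbounded hunb p n
  exact ⟨⟨e1Reduction p q, measurable_e1Reduction p q,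
      exists_forall_dist_e1Reduction_lt_iff fun n => (hq n).le⟩,
    ⟨linftyReduction (TopologicalSpace.denseSeq X), measurable_linftyReduction _,
      exists_forall_dist_lt_iff_linftyReduction (TopologicalSpace.denseRange_denseSeq X)⟩⟩

/-- For a Polish metric space `X` with unbounded metric,
`E₁ ≤_B ℓ_∞(X) ≤_B ℓ_∞`. -/
theorem E1_le_linftyX_le_linfty
    (X : Type*) [MetricSpace X] [CompleteSpace X] [SecondCountableTopology X]
    [MeasurableSpace X] [BorelSpace X]
    (hunb : ∀ C : ℝ, ∃ x y : X, C < dist x y) :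
    (∃ τ : (ℕ → ℕ → Bool) → (ℕ → X), Measurable τ ∧
      ∀ x y : ℕ → ℕ → Bool,
        (∃ m, ∀ n ≥ m, x n = y n) ↔ (∃ C : ℝ, ∀ i, dist (τ x i) (τ y i) < C)) ∧
    (∃ π : (ℕ → X) → (ℕ → ℝ), Measurable π ∧
      ∀ x y : ℕ → X,
        (∃ C : ℝ, ∀ i, dist (x i) (y i) < C) ↔ (∃ C : ℝ, ∀ n, |π x n - π y n| < C)) :=
  E1_le_linftyX_le_linfty_general X hunb
end

section
/- Let t⃗ = (t_i) be a sequence of nonnegative reals such that the inductively defined thresholds n_0 < n_1 < ... with A_k = {i : n_{k−1} < t_i ≤ n_k} all exist and each A_k is infinite, so that ω is partitioned into infinitely many infinite sets A_0, A_1, ... with (t_i)_{i ∈ A_k} bounded for each k. Then the equivalence relation E_{t⃗} on 2^ω (x E_{t⃗} y iff sup_i t_i|x(i)−y(i)| < ∞) is Borel bireducible with E_1. -/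
/-- The relation `E_t⃗` on `2^ω`: `x E_t⃗ y` iff `sup_i t_i·|x(i)−y(i)| < ∞`. -/
def EtRel (t : ℕ → ℝ) (x y : ℕ → Bool) : Prop :=
  ∃ C : ℝ, ∀ i, t i * |(if x i then (1:ℝ) else 0) - (if y i then (1:ℝ) else 0)| < C

/-- `E₁` on `(2^ω)^ω`: eventual agreement of the component sequences. -/
def E1Rel (x y : ℕ → ℕ → Bool) : Prop := ∃ m, ∀ n ≥ m, x n = y n

open scoped Classical

noncomputable section EtAux

/-- The pieces of the partition. -/
def EtSet (t : ℕ → ℝ) (N : ℕ → ℕ) : ℕ → Set ℕ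
  | 0 => {i | t i ≤ (N 0 : ℝ)}
  | (k+1) => {i | (N k : ℝ) < t i ∧ t i ≤ (N (k+1) : ℝ)}

lemma EtSet_ub {t : ℕ → ℝ} {N : ℕ → ℕ} {k i : ℕ} (h : i ∈ EtSet t N k) : t i ≤ (N k : ℝ) := by
  cases k with
  | zero => exact h
  | succ k => exact h.2

lemma EtSet_lb {t : ℕ → ℝ} {N : ℕ → ℕ} {k i : ℕ} (h : i ∈ EtSet t N (k+1)) :
    (N k : ℝ) < t i := h.1

/-- Index of the piece containing `i`. -/
def kIdx (t : ℕ → ℝ) (N : ℕ → ℕ) (i : ℕ) : ℕ := sInf {k | t i ≤ (N k : ℝ)}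

lemma kIdx_nonempty (t : ℕ → ℝ) {N : ℕ → ℕ} (hN : StrictMono N) (i : ℕ) :
    {k | t i ≤ (N k : ℝ)}.Nonempty := by
  refine ⟨⌈t i⌉₊, ?_⟩
  have h1 : t i ≤ (⌈t i⌉₊ : ℝ) := Nat.le_ceil _
  have h2 : (⌈t i⌉₊ : ℕ) ≤ N ⌈t i⌉₊ := hN.le_apply
  exact h1.trans (by exact_mod_cast h2)

lemma mem_EtSet_kIdx {t : ℕ → ℝ} {N : ℕ → ℕ} (hN : StrictMono N) (i : ℕ) :
    i ∈ EtSet t N (kIdx t N i) := by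
  have hmem : kIdx t N i ∈ {k | t i ≤ (N k : ℝ)} :=
    Nat.sInf_mem (kIdx_nonempty t hN i)
  rcases h : kIdx t N i with _ | k
  · rw [h] at hmem; exact hmem
  · rw [h] at hmem
    have hk : k ∉ {k | t i ≤ (N k : ℝ)} := by
      apply Nat.notMem_of_lt_sInf
      rw [kIdx] at h; omega
    exact ⟨lt_of_not_ge hk, hmem⟩

lemma kIdx_eq {t : ℕ → ℝ} {N : ℕ → ℕ} (hN : StrictMono N) {k i : ℕ}
    (h : i ∈ EtSet t N k) : kIdx t N i = k := by
  have h1 : kIdx t N i ≤ k := Nat.sInf_le (EtSet_ub h)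
  have h2 : k ≤ kIdx t N i := by
    cases k with
    | zero => omega
    | succ k =>
      have hmem : t i ≤ (N (kIdx t N i) : ℝ) := Nat.sInf_mem (kIdx_nonempty t hN i)
      have : (N k : ℝ) < (N (kIdx t N i) : ℝ) := lt_of_lt_of_le (EtSet_lb h) hmem
      have : N k < N (kIdx t N i) := by exact_mod_cast this
      exact hN.lt_iff_lt.mp this
  omega

lemma EtSet_infinite {t : ℕ → ℝ} {N : ℕ → ℕ}
    (h0 : {i : ℕ | t i ≤ (N 0 : ℝ)}.Infinite)
    (hk : ∀ k, {i : ℕ | (N k : ℝ) < t i ∧ t i ≤ (N (k+1) : ℝ)}.Infinite)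
    (k : ℕ) : (EtSet t N k).Infinite := by
  cases k with
  | zero => exact h0
  | succ k => exact hk k

/-- The forward reduction. -/
def fEt (t : ℕ → ℝ) (N : ℕ → ℕ) (x : ℕ → Bool) : ℕ → ℕ → Bool :=
  fun k m => x (Nat.nth (· ∈ EtSet t N k) m)

/-- The backward reduction. -/
def gEt (t : ℕ → ℝ) (N : ℕ → ℕ) (x : ℕ → ℕ → Bool) : ℕ → Bool :=
  fun i => x (kIdx t N i) (Nat.count (· ∈ EtSet t N (kIdx t N i)) i)

lemma fEt_gEt {t : ℕ → ℝ} {N : ℕ → ℕ} (hN : StrictMono N)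
    (h0 : {i : ℕ | t i ≤ (N 0 : ℝ)}.Infinite)
    (hk : ∀ k, {i : ℕ | (N k : ℝ) < t i ∧ t i ≤ (N (k+1) : ℝ)}.Infinite)
    (x : ℕ → ℕ → Bool) : fEt t N (gEt t N x) = x := by
  funext k m
  have hinf : {i | i ∈ EtSet t N k}.Infinite := EtSet_infinite h0 hk k
  have hmem : Nat.nth (· ∈ EtSet t N k) m ∈ EtSet t N k :=
    Nat.nth_mem_of_infinite hinf m
  have hκ : kIdx t N (Nat.nth (· ∈ EtSet t N k) m) = k := kIdx_eq hN hmem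
  simp only [fEt, gEt, hκ]
  congr 1
  exact Nat.count_nth_of_infinite hinf m

/-- Restatement of `EtRel` in terms of the thresholds. -/
lemma EtRel_iff {t : ℕ → ℝ} {N : ℕ → ℕ} (hN : StrictMono N) (x y : ℕ → Bool) :
    EtRel t x y ↔ ∃ k, ∀ i, x i ≠ y i → t i ≤ (N k : ℝ) := by
  constructor
  · rintro ⟨C, hC⟩
    refine ⟨⌈C⌉₊, fun i hi => ?_⟩
    have habs : |(if x i then (1:ℝ) else 0) - (if y i then (1:ℝ) else 0)| = 1 := by
      cases hx : x i <;> cases hy : y i <;> simp_all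
    have := hC i
    rw [habs, mul_one] at this
    have h1 : C ≤ (⌈C⌉₊ : ℝ) := Nat.le_ceil _
    have h2 : (⌈C⌉₊ : ℕ) ≤ N ⌈C⌉₊ := hN.le_apply
    have h2' : ((⌈C⌉₊ : ℕ) : ℝ) ≤ (N ⌈C⌉₊ : ℝ) := by exact_mod_cast h2
    linarith
  · rintro ⟨k, hke⟩
    refine ⟨(N k : ℝ) + 1, fun i => ?_⟩
    by_cases h : x i = y i
    · have : (if x i then (1:ℝ) else 0) - (if y i then (1:ℝ) else 0) = 0 := by
        rw [h]; ring
      rw [this, abs_zero, mul_zero]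
      positivity
    · have habs : |(if x i then (1:ℝ) else 0) - (if y i then (1:ℝ) else 0)| = 1 := by
        cases hx : x i <;> cases hy : y i <;> simp_all
      rw [habs, mul_one]
      have := hke i h
      linarith

/-- Columns of `fEt` agree iff `x` and `y` agree on the corresponding piece. -/
lemma fEt_col_eq {t : ℕ → ℝ} {N : ℕ → ℕ}
    (h0 : {i : ℕ | t i ≤ (N 0 : ℝ)}.Infinite)
    (hk : ∀ k, {i : ℕ | (N k : ℝ) < t i ∧ t i ≤ (N (k+1) : ℝ)}.Infinite)
    (x y : ℕ → Bool) (k : ℕ) :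
    fEt t N x k = fEt t N y k ↔ ∀ i ∈ EtSet t N k, x i = y i := by
  have hinf : {i | i ∈ EtSet t N k}.Infinite := EtSet_infinite h0 hk k
  constructor
  · intro h i hi
    have hsurj : i ∈ Set.range (Nat.nth (· ∈ EtSet t N k)) := by
      rw [Nat.range_nth_of_infinite hinf]; exact hi
    obtain ⟨m, rfl⟩ := hsurj
    exact congrFun h m
  · intro h
    funext m
    exact h _ (Nat.nth_mem_of_infinite hinf m)

/-- The key equivalence. -/
lemma key {t : ℕ → ℝ} {N : ℕ → ℕ} (hN : StrictMono N)
    (h0 : {i : ℕ | t i ≤ (N 0 : ℝ)}.Infinite)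
    (hk : ∀ k, {i : ℕ | (N k : ℝ) < t i ∧ t i ≤ (N (k+1) : ℝ)}.Infinite)
    (x y : ℕ → Bool) : EtRel t x y ↔ E1Rel (fEt t N x) (fEt t N y) := by
  rw [EtRel_iff hN]
  constructor
  · rintro ⟨k, h⟩
    refine ⟨k + 1, fun n hn => ?_⟩
    rw [fEt_col_eq h0 hk]
    intro i hi
    by_contra hne
    have h1 : t i ≤ (N k : ℝ) := h i hne
    obtain ⟨n', rfl⟩ : ∃ n', n = n' + 1 := ⟨n - 1, by omega⟩
    have h2 : (N n' : ℝ) < t i := EtSet_lb hi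
    have h3 : N k ≤ N n' := hN.monotone (by omega)
    have h3' : (N k : ℝ) ≤ (N n' : ℝ) := by exact_mod_cast h3
    linarith
  · rintro ⟨m, h⟩
    refine ⟨m, fun i hne => ?_⟩
    by_contra hgt
    push_neg at hgt
    have hmem : i ∈ EtSet t N (kIdx t N i) := mem_EtSet_kIdx hN i
    have hub : t i ≤ (N (kIdx t N i) : ℝ) := EtSet_ub hmem
    have hge : kIdx t N i ≥ m := by
      by_contra hlt
      push_neg at hlt
      have : N (kIdx t N i) ≤ N m := hN.monotone (by omega)
      have : (N (kIdx t N i) : ℝ) ≤ (N m : ℝ) := by exact_mod_cast this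
      linarith
    have hcol := h (kIdx t N i) hge
    rw [fEt_col_eq h0 hk] at hcol
    exact hne (hcol i hmem)

lemma fEt_measurable (t : ℕ → ℝ) (N : ℕ → ℕ) : Measurable (fEt t N) := by
  apply measurable_pi_lambda
  intro k
  apply measurable_pi_lambda
  intro m
  exact measurable_pi_apply _

lemma gEt_measurable (t : ℕ → ℝ) (N : ℕ → ℕ) : Measurable (gEt t N) := by
  apply measurable_pi_lambda
  intro i
  exact (measurable_pi_apply _).comp (measurable_pi_apply _)

end EtAux

/-- If the thresholds `n_0 < n_1 < ⋯` exist, with `{i : t_i ≤ n_0}` infinite and each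
`A_k = {i : n_{k−1} < t_i ≤ n_k}` infinite, then `E_t⃗` is Borel bireducible with `E₁`. -/
theorem Et_bireducible_E1
    (t : ℕ → ℝ) (ht : ∀ i, 0 ≤ t i)
    (N : ℕ → ℕ) (hN : StrictMono N)
    (h0 : {i : ℕ | t i ≤ (N 0 : ℝ)}.Infinite)
    (hk : ∀ k, {i : ℕ | (N k : ℝ) < t i ∧ t i ≤ (N (k+1) : ℝ)}.Infinite) :
    (∃ f : (ℕ → Bool) → (ℕ → ℕ → Bool), Measurable f ∧
      ∀ x y, EtRel t x y ↔ E1Rel (f x) (f y)) ∧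
    (∃ g : (ℕ → ℕ → Bool) → (ℕ → Bool), Measurable g ∧
      ∀ x y, E1Rel x y ↔ EtRel t (g x) (g y)) := by
  constructor
  · exact ⟨fEt t N, fEt_measurable t N, key hN h0 hk⟩
  · refine ⟨gEt t N, gEt_measurable t N, fun x y => ?_⟩
    rw [key hN h0 hk, fEt_gEt hN h0 hk, fEt_gEt hN h0 hk]
end

section
/- For every sequence t⃗ = (t_i) of nonnegative reals, the equivalence relation E_{t⃗} on 2^ω defined by x E_{t⃗} y iff sup_i t_i·|x(i)−y(i)| < ∞ is either smooth, Borel bireducible with E_0, or Borel bireducible with E_1. -/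
/-- `E₀` on `2^ω`: eventual agreement. -/
def E0Rel (x y : ℕ → Bool) : Prop := ∃ m, ∀ n ≥ m, x n = y n

/-!
`x E_t y` says that `x` and `y` agree eventually along the filter `comap t atTop` of index sets
containing all `i` with `t i` large. Precomposition with a map `φ : ι → ℕ` that carries a filter
`G` onto this one, and that has an inverse `ψ` up to the filters, gives Borel reductions in
both directions between eventual agreement along `comap t atTop` and along `G`.

If for some `c` every band `{i | c < t i ≤ C}` is finite, then either `{i | c < t i}` is finite
and `E_t` is trivial, or its increasing enumeration carries the Fréchet filter onto
`comap t atTop`, giving `E₀`. Otherwise `(c, ∞)` can be cut into consecutive bands each holding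
infinitely many indices; enumerating the `k`-th band as the `k`-th column carries
`comap Prod.fst atTop` on `ℕ × ℕ` onto `comap t atTop`, which is `E₁` after currying.
-/

open Filter Function

def BorelReduces {α β : Type*} [MeasurableSpace α] [MeasurableSpace β]
    (E : α → α → Prop) (F : β → β → Prop) : Prop :=
  ∃ f : α → β, Measurable f ∧ ∀ x y, E x y ↔ F (f x) (f y)

def BorelBireducible {α β : Type*} [MeasurableSpace α] [MeasurableSpace β]
    (E : α → α → Prop) (F : β → β → Prop) : Prop :=
  BorelReduces E F ∧ BorelReduces F E

section BorelReduces

variable {α β γ : Type*} [MeasurableSpace α] [MeasurableSpace β] [MeasurableSpace γ]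
  {E : α → α → Prop} {F : β → β → Prop} {G : γ → γ → Prop}

theorem BorelReduces.trans (hEF : BorelReduces E F) (hFG : BorelReduces F G) :
    BorelReduces E G := by
  obtain ⟨f, hf, hf_iff⟩ := hEF
  obtain ⟨g, hg, hg_iff⟩ := hFG
  exact ⟨g ∘ f, hg.comp hf, fun x y => (hf_iff x y).trans (hg_iff _ _)⟩

theorem BorelBireducible.trans (hEF : BorelBireducible E F) (hFG : BorelBireducible F G) :
    BorelBireducible E G :=
  ⟨hEF.1.trans hFG.1, hFG.2.trans hEF.2⟩

end BorelReduces

namespace Filter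

theorem comap_atTop_le_cofinite {α β : Type*} [Preorder β] [NoMaxOrder β] (t : α → β) :
    comap t atTop ≤ cofinite :=
  le_cofinite_iff_eventually_ne.2 fun i =>
    ((eventually_gt_atTop (t i)).comap t).mono fun _ hj => ne_of_apply_ne t hj.ne'

theorem map_eq_of_eventually_inverse {α β : Type*} {f : Filter α} {g : Filter β} {φ : α → β}
    {ψ : β → α} (hφ : Tendsto φ f g) (hψ : Tendsto ψ g f) (hφψ : φ ∘ ψ =ᶠ[g] id) :
    map φ f = g :=
  le_antisymm hφ <| calc
    g = map (φ ∘ ψ) g := by rw [map_congr hφψ, map_id]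
    _ = map φ (map ψ g) := map_map.symm
    _ ≤ map φ f := map_mono hψ

end Filter

section EventuallyEq

variable {ι κ X : Type*}

theorem uncurry_eventuallyEq_comap_fst_iff {l : Filter ι} {x y : ι → κ → X} :
    uncurry x =ᶠ[comap Prod.fst l] uncurry y ↔ x =ᶠ[l] y := by
  simp only [EventuallyEq, eventually_comap, funext_iff, Prod.forall, uncurry_apply_pair]
  exact eventually_congr (Eventually.of_forall fun i =>
    ⟨fun h k => h i k rfl, fun h _ k hi => hi ▸ h k⟩)

variable [MeasurableSpace X]

theorem borelReduces_eventuallyEq_of_map_eq {F : Filter κ} {G : Filter ι} {φ : ι → κ}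
    (h : map φ G = F) :
    BorelReduces (fun x y : κ → X => x =ᶠ[F] y) (fun x y : ι → X => x =ᶠ[G] y) :=
  ⟨(· ∘ φ), measurable_pi_lambda _ fun i => measurable_pi_apply (φ i),
    fun _ _ => h ▸ eventuallyEq_map⟩

theorem borelBireducible_eventuallyEq {F : Filter κ} {G : Filter ι} {φ : ι → κ} {ψ : κ → ι}
    (hφ : Tendsto φ G F) (hψ : Tendsto ψ F G) (hψφ : ψ ∘ φ =ᶠ[G] id) (hφψ : φ ∘ ψ =ᶠ[F] id) :
    BorelBireducible (fun x y : κ → X => x =ᶠ[F] y) (fun x y : ι → X => x =ᶠ[G] y) :=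
  ⟨borelReduces_eventuallyEq_of_map_eq (map_eq_of_eventually_inverse hφ hψ hφψ),
    borelReduces_eventuallyEq_of_map_eq (map_eq_of_eventually_inverse hψ hφ hψφ)⟩

theorem borelBireducible_eventuallyEq_comap_fst (l : Filter ι) :
    BorelBireducible (fun x y : ι × κ → X => x =ᶠ[comap Prod.fst l] y)
      (fun x y : ι → κ → X => x =ᶠ[l] y) :=
  ⟨⟨curry, (MeasurableEquiv.curry ι κ X).measurable, fun x y => by
      simpa only [uncurry_curry] using
        uncurry_eventuallyEq_comap_fst_iff (l := l) (x := curry x) (y := curry y)⟩,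
    ⟨uncurry, measurable_uncurry, fun _ _ => uncurry_eventuallyEq_comap_fst_iff.symm⟩⟩

end EventuallyEq

theorem abs_ite_sub_ite (a b : Bool) :
    |(if a then (1 : ℝ) else 0) - (if b then 1 else 0)| = if a = b then 0 else 1 := by
  cases a <;> cases b <;> norm_num

theorem etRel_eq_eventuallyEq (t : ℕ → ℝ) : EtRel t = fun x y => x =ᶠ[comap t atTop] y := by
  ext x y
  rw [EventuallyEq, (atTop_basis.comap t).eventually_iff]
  simp only [true_and, Set.mem_preimage, Set.mem_Ici]
  constructor
  · rintro ⟨C, hC⟩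
    refine ⟨C, fun i hi => ?_⟩
    by_contra hne
    have := hC i
    rw [abs_ite_sub_ite, if_neg hne, mul_one] at this
    exact this.not_ge hi
  · rintro ⟨C, hC⟩
    refine ⟨max C 0 + 1, fun i => ?_⟩
    rw [abs_ite_sub_ite]
    split_ifs with h
    · rw [mul_zero]
      positivity
    · rw [mul_one]
      have : t i < C := not_le.1 fun hi => h (hC hi)
      linarith [le_max_left C 0]

theorem e0Rel_eq_eventuallyEq : E0Rel = fun x y => x =ᶠ[atTop] y := by
  ext x y
  exact eventually_atTop.symm

theorem e1Rel_eq_eventuallyEq : E1Rel = fun x y => x =ᶠ[atTop] y := by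
  ext x y
  exact eventually_atTop.symm

theorem etRel_of_finite_setOf_lt {t : ℕ → ℝ} {c : ℝ} (h : {i | c < t i}.Finite) (x y : ℕ → Bool) :
    EtRel t x y := by
  rw [etRel_eq_eventuallyEq]
  filter_upwards [(eventually_gt_atTop c).comap t,
    comap_atTop_le_cofinite t h.compl_mem_cofinite] with i hc hnc using absurd hc hnc

theorem borelBireducible_etRel_e0Rel {t : ℕ → ℝ} {c : ℝ} (hS : {i | c < t i}.Infinite)
    (hband : ∀ C, {i | c < t i ∧ t i ≤ C}.Finite) : BorelBireducible (EtRel t) E0Rel := by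
  classical
  have hcount : LeftInverse (Nat.count (c < t ·)) (Nat.nth (c < t ·)) :=
    Nat.count_nth_of_infinite hS
  rw [etRel_eq_eventuallyEq, e0Rel_eq_eventuallyEq]
  refine borelBireducible_eventuallyEq (φ := Nat.nth _) (ψ := Nat.count _) ?_ ?_
    (.of_forall hcount) ?_
  · rw [tendsto_comap_iff, tendsto_atTop]
    intro C
    rw [← Nat.cofinite_eq_atTop, eventually_cofinite]
    exact ((hband C).preimage (Nat.nth_injective hS).injOn).subset fun n hn =>
      ⟨Nat.nth_mem_of_infinite hS n, (not_le.1 hn).le⟩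
  · refine (tendsto_atTop_atTop_of_monotone (Nat.count_monotone _) fun n =>
      ⟨_, (hcount n).ge⟩).mono_left ?_
    exact Nat.cofinite_eq_atTop ▸ comap_atTop_le_cofinite t
  · filter_upwards [(eventually_gt_atTop c).comap t] with i hi using Nat.nth_count hi

theorem exists_cuts_forall_band_infinite {ι : Type*} {t : ι → ℝ}
    (h : ∀ c, ∃ C, {i | c < t i ∧ t i ≤ C}.Infinite) :
    ∃ C : ℕ → ℝ, Monotone C ∧ Tendsto C atTop atTop ∧
      ∀ k, {i | C k < t i ∧ t i ≤ C (k + 1)}.Infinite := by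
  choose D hD using h
  let C : ℕ → ℝ := fun k => Nat.rec 0 (fun _ c => max (D c) (c + 1)) k
  have hsucc : ∀ k, C k + 1 ≤ C (k + 1) := fun k => le_max_right _ _
  have hnat : ∀ k : ℕ, (k : ℝ) ≤ C k := by
    intro k
    induction k with
    | zero => exact Nat.cast_zero.le
    | succ k ih => push_cast; linarith [hsucc k]
  refine ⟨C, monotone_nat_of_le_succ fun k => by linarith [hsucc k],
    tendsto_atTop_mono hnat (tendsto_natCast_atTop_atTop (R := ℝ)), fun k => ?_⟩
  exact (hD (C k)).mono fun i hi => ⟨hi.1, hi.2.trans (le_max_left _ _)⟩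

section BandIndex

variable {C : ℕ → ℝ} (hC : Tendsto C atTop atTop)

/-- The `k` with `r ∈ (C k, C (k + 1)]`, for monotone `C` and `C 0 < r`; `0` when `r ≤ C 0`. -/
noncomputable def bandIndex (r : ℝ) : ℕ :=
  open Classical in Nat.find ((tendsto_add_atTop_iff_nat 1).2 hC |>.eventually_ge_atTop r).exists

theorem le_bandIndex_succ (r : ℝ) : r ≤ C (bandIndex hC r + 1) :=
  Nat.find_spec ((tendsto_add_atTop_iff_nat 1).2 hC |>.eventually_ge_atTop r).exists

theorem lt_bandIndex {r : ℝ} (hr : C 0 < r) : C (bandIndex hC r) < r := by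
  rcases h : bandIndex hC r with _ | k
  · exact hr
  · exact not_le.1 (Nat.find_min _ (show k < bandIndex hC r by omega))

theorem tendsto_bandIndex (hCm : Monotone C) : Tendsto (bandIndex hC) atTop atTop :=
  tendsto_atTop.2 fun N => (eventually_gt_atTop (C N)).mono fun r hr =>
    not_lt.1 fun hlt => (le_bandIndex_succ hC r).not_gt (hr.trans_le' (hCm hlt))

variable {hC} in
theorem bandIndex_eq (hCm : Monotone C) {r : ℝ} {k : ℕ} (hk : C k < r) (hk' : r ≤ C (k + 1)) :
    bandIndex hC r = k :=
  (Nat.find_eq_iff _).2 ⟨hk', fun _ hn => not_le.2 (hk.trans_le' (hCm hn))⟩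

end BandIndex

theorem borelBireducible_etRel_e1Rel {t : ℕ → ℝ}
    (h : ∀ c, ∃ C, {i | c < t i ∧ t i ≤ C}.Infinite) : BorelBireducible (EtRel t) E1Rel := by
  classical
  obtain ⟨C, hCm, hC, hband⟩ := exists_cuts_forall_band_infinite h
  let band (k i : ℕ) : Prop := C k < t i ∧ t i ≤ C (k + 1)
  let φ : ℕ × ℕ → ℕ := fun p => Nat.nth (band p.1) p.2
  let ψ : ℕ → ℕ × ℕ := fun i => (bandIndex hC (t i), Nat.count (band (bandIndex hC (t i))) i)
  have hφ_mem (p : ℕ × ℕ) : band p.1 (φ p) := Nat.nth_mem_of_infinite (hband p.1) p.2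
  have hψφ : LeftInverse ψ φ := fun ⟨k, j⟩ => by
    have hk : bandIndex hC (t (φ (k, j))) = k :=
      bandIndex_eq hCm (hφ_mem (k, j)).1 (hφ_mem (k, j)).2
    simp only [ψ, hk]
    exact Prod.ext rfl (Nat.count_nth_of_infinite (hband k) j)
  rw [etRel_eq_eventuallyEq, e1Rel_eq_eventuallyEq]
  refine (borelBireducible_eventuallyEq (φ := φ) (ψ := ψ) ?_ ?_ (.of_forall hψφ) ?_).trans
    (borelBireducible_eventuallyEq_comap_fst atTop)
  · rw [tendsto_comap_iff]
    exact tendsto_atTop_mono (fun p => (hφ_mem p).1.le) (hC.comp tendsto_comap)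
  · rw [tendsto_comap_iff]
    exact (tendsto_bandIndex hC hCm).comp tendsto_comap
  · filter_upwards [(eventually_gt_atTop (C 0)).comap t] with i hi
    exact Nat.nth_count (p := band _) ⟨lt_bandIndex hC hi, le_bandIndex_succ hC _⟩

theorem Et_trichotomy_general (t : ℕ → ℝ) :
    (∃ f : (ℕ → Bool) → (ℕ → Bool), Measurable f ∧
      ∀ x y, EtRel t x y ↔ f x = f y) ∨
    ((∃ f : (ℕ → Bool) → (ℕ → Bool), Measurable f ∧
        ∀ x y, EtRel t x y ↔ E0Rel (f x) (f y)) ∧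
     (∃ g : (ℕ → Bool) → (ℕ → Bool), Measurable g ∧
        ∀ x y, E0Rel x y ↔ EtRel t (g x) (g y))) ∨
    ((∃ f : (ℕ → Bool) → (ℕ → ℕ → Bool), Measurable f ∧
        ∀ x y, EtRel t x y ↔ E1Rel (f x) (f y)) ∧
     (∃ g : (ℕ → ℕ → Bool) → (ℕ → Bool), Measurable g ∧
        ∀ x y, E1Rel x y ↔ EtRel t (g x) (g y))) := by
  by_cases hE1 : ∀ c, ∃ C, {i | c < t i ∧ t i ≤ C}.Infinite
  · exact Or.inr (Or.inr (borelBireducible_etRel_e1Rel hE1))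
  push Not at hE1
  obtain ⟨c, hband⟩ := hE1
  rcases Set.finite_or_infinite {i | c < t i} with hS | hS
  · exact Or.inl ⟨fun _ _ => false, measurable_const,
      fun x y => iff_of_true (etRel_of_finite_setOf_lt hS x y) rfl⟩
  · exact Or.inr (Or.inl (borelBireducible_etRel_e0Rel hS hband))

/-- For every sequence `t⃗` of nonnegative reals, `E_t⃗` is either smooth, Borel
bireducible with `E₀`, or Borel bireducible with `E₁`. -/
theorem Et_trichotomy (t : ℕ → ℝ) (ht : ∀ i, 0 ≤ t i) :
    (∃ f : (ℕ → Bool) → (ℕ → Bool), Measurable f ∧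
      ∀ x y, EtRel t x y ↔ f x = f y) ∨
    ((∃ f : (ℕ → Bool) → (ℕ → Bool), Measurable f ∧
        ∀ x y, EtRel t x y ↔ E0Rel (f x) (f y)) ∧
     (∃ g : (ℕ → Bool) → (ℕ → Bool), Measurable g ∧
        ∀ x y, E0Rel x y ↔ EtRel t (g x) (g y))) ∨
    ((∃ f : (ℕ → Bool) → (ℕ → ℕ → Bool), Measurable f ∧
        ∀ x y, EtRel t x y ↔ E1Rel (f x) (f y)) ∧
     (∃ g : (ℕ → ℕ → Bool) → (ℕ → Bool), Measurable g ∧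
        ∀ x y, E1Rel x y ↔ EtRel t (g x) (g y))) :=
  Et_trichotomy_general t
end

section
/- For any 1 ≤ q < ∞, there exists a continuous path τ ↦ V_τ, 0 ≤ τ ≤ 1/2, of invertible bounded linear operators on (ℓ_q ⊕ ℓ_q ⊕ ℓ_q)_q, with V_0 the identity, V_{1/2}(u,v,w) = (u,w,v), and ‖V_τ‖ ≤ 2 for all τ. -/
/-- The sequence space `ℓ_q`. -/
noncomputable def lpSeq (q : ℝ) (hq : 1 ≤ q) : Type :=
  lp (fun _ : ℕ => ℝ) (ENNReal.ofReal q)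

noncomputable instance (q : ℝ) (hq : 1 ≤ q) : NormedAddCommGroup (lpSeq q hq) :=
  haveI : Fact (1 ≤ ENNReal.ofReal q) :=
    ⟨by simpa [ENNReal.ofReal_one] using ENNReal.ofReal_le_ofReal hq⟩
  inferInstanceAs (NormedAddCommGroup (lp (fun _ : ℕ => ℝ) (ENNReal.ofReal q)))

noncomputable instance (q : ℝ) (hq : 1 ≤ q) : NormedSpace ℝ (lpSeq q hq) :=
  haveI : Fact (1 ≤ ENNReal.ofReal q) :=
    ⟨by simpa [ENNReal.ofReal_one] using ENNReal.ofReal_le_ofReal hq⟩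
  inferInstanceAs (NormedSpace ℝ (lp (fun _ : ℕ => ℝ) (ENNReal.ofReal q)))

/-- The `q`-direct sum `(ℓ_q ⊕ ℓ_q ⊕ ℓ_q)_q` of three copies of `ℓ_q`. -/
noncomputable def tripleSum (q : ℝ) (hq : 1 ≤ q) : Type :=
  PiLp (ENNReal.ofReal q) (fun _ : Fin 3 => lpSeq q hq)

noncomputable instance (q : ℝ) (hq : 1 ≤ q) : NormedAddCommGroup (tripleSum q hq) :=
  haveI : Fact (1 ≤ ENNReal.ofReal q) :=
    ⟨by simpa [ENNReal.ofReal_one] using ENNReal.ofReal_le_ofReal hq⟩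
  inferInstanceAs (NormedAddCommGroup (PiLp (ENNReal.ofReal q) (fun _ : Fin 3 => lpSeq q hq)))

noncomputable instance (q : ℝ) (hq : 1 ≤ q) : NormedSpace ℝ (tripleSum q hq) :=
  haveI : Fact (1 ≤ ENNReal.ofReal q) :=
    ⟨by simpa [ENNReal.ofReal_one] using ENNReal.ofReal_le_ofReal hq⟩
  inferInstanceAs (NormedSpace ℝ (PiLp (ENNReal.ofReal q) (fun _ : Fin 3 => lpSeq q hq)))

/-!
If `K ^ 3 = -K`, then `exp (θ K) = 1 + sin θ • K + (1 - cos θ) • K ^ 2`, which is invertible with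
inverse `exp (-θ K)` and depends continuously on `θ`. With `K (u, v, w) = (0, w, -v)` a quarter
turn carries `(u, v, w)` to `(u, w, -v)`. The remaining sign is removed by a half turn of the third
summand along a complex structure `T` of `ℓ_q`, namely `(a, b) ↦ (-b, a)` on each pair of
coordinates `(2k, 2k+1)`: `exp (π T) = -1`. Each stage is a diagonal contraction plus `sin θ • K`
with `‖K‖ ≤ 1`, so it has norm at most `2`; the second stage is preceded by the isometry
`(u, v, w) ↦ (u, w, -v)`.
-/

open Real Function
open scoped ENNReal

section Rotor

variable {A : Type*}

noncomputable def rotor [Ring A] [Algebra ℝ A] (K : A) (θ : ℝ) : A :=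
  1 + sin θ • K + (1 - cos θ) • K ^ 2

section Ring

variable [Ring A] [Algebra ℝ A] {K : A}

@[simp] theorem rotor_zero (K : A) : rotor K 0 = 1 := by simp [rotor]

theorem rotor_pi_div_two (K : A) : rotor K (π / 2) = 1 + K + K ^ 2 := by simp [rotor]

theorem rotor_pi (K : A) : rotor K π = 1 + (2 : ℝ) • K ^ 2 := by
  simp only [rotor, sin_pi, cos_pi, zero_smul, add_zero]
  norm_num

theorem rotor_mul_rotor_neg (hK : K ^ 3 = -K) (θ : ℝ) : rotor K θ * rotor K (-θ) = 1 := by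
  have hK4 : (K ^ 2) ^ 2 = -K ^ 2 := by rw [← pow_mul, pow_succ, hK, neg_mul, ← sq]
  simp only [rotor, sin_neg, cos_neg, add_mul, mul_add, one_mul, mul_one, smul_mul_assoc,
    mul_smul_comm, ← sq, ← pow_succ, ← pow_succ', hK, hK4, smul_neg]
  match_scalars <;> nlinarith [sin_sq_add_cos_sq θ]

noncomputable def rotorUnit (hK : K ^ 3 = -K) (θ : ℝ) : Aˣ where
  val := rotor K θ
  inv := rotor K (-θ)
  val_inv := rotor_mul_rotor_neg hK θ
  inv_val := by simpa using rotor_mul_rotor_neg hK (-θ)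

end Ring

theorem continuous_rotor [Ring A] [Algebra ℝ A] [TopologicalSpace A] [IsTopologicalRing A]
    [ContinuousSMul ℝ A] (K : A) : Continuous (rotor K) := by
  unfold rotor
  fun_prop

theorem norm_rotor_le [NormedRing A] [NormedAlgebra ℝ A] (K : A) (θ : ℝ) :
    ‖rotor K θ‖ ≤ ‖1 + (1 - cos θ) • K ^ 2‖ + ‖K‖ := by
  calc ‖rotor K θ‖ = ‖1 + (1 - cos θ) • K ^ 2 + sin θ • K‖ := by rw [rotor, add_right_comm]
    _ ≤ ‖1 + (1 - cos θ) • K ^ 2‖ + |sin θ| * ‖K‖ := by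
        grw [norm_add_le, norm_smul, Real.norm_eq_abs]
    _ ≤ ‖1 + (1 - cos θ) • K ^ 2‖ + ‖K‖ := by grw [abs_sin_le_one, one_mul]

end Rotor

theorem Memℓp.comp_injective {α β E : Type*} [NormedAddCommGroup E] {p : ℝ≥0∞}
    {f : α → E} (hf : Memℓp f p) {e : β → α} (he : Injective e) : Memℓp (f ∘ e) p := by
  rcases p.trichotomy with rfl | rfl | hp
  · exact memℓp_zero ((memℓp_zero_iff.1 hf).preimage he.injOn)
  · exact memℓp_infty ((memℓp_infty_iff.1 hf).mono
      (Set.range_comp_subset_range e fun i => ‖f i‖))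
  · exact memℓp_gen (((memℓp_gen_iff hp).1 hf).comp_injective he)

theorem lp.norm_le_of_forall_norm_le_comp {α E : Type*} [NormedAddCommGroup E] {p : ℝ≥0∞}
    [Fact (1 ≤ p)] {e : α → α} (he : Injective e) {f g : lp (fun _ : α => E) p}
    (h : ∀ i, ‖g i‖ ≤ ‖f (e i)‖) : ‖g‖ ≤ ‖f‖ := by
  have hp0 : p ≠ 0 := (zero_lt_one.trans_le Fact.out).ne'
  rcases p.dichotomy with rfl | hp
  · exact norm_le_of_forall_le (norm_nonneg f) fun i => (h i).trans (norm_apply_le_norm hp0 f _)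
  · have hp : 0 < p.toReal := zero_lt_one.trans_le hp
    refine norm_le_of_forall_sum_le hp (norm_nonneg f) fun s => ?_
    calc ∑ i ∈ s, ‖g i‖ ^ p.toReal
        ≤ ∑ i ∈ s, ‖f (e i)‖ ^ p.toReal := by gcongr with i; exact h i
      _ = ∑ j ∈ s.map ⟨e, he⟩, ‖f j‖ ^ p.toReal :=
        (Finset.sum_map s ⟨e, he⟩ fun j => ‖f j‖ ^ p.toReal).symm
      _ ≤ ‖f‖ ^ p.toReal := sum_rpow_le_norm_rpow hp f _

def Nat.pairSwap (n : ℕ) : ℕ := if Even n then n + 1 else n - 1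

theorem Nat.pairSwap_two_mul (k : ℕ) : (2 * k).pairSwap = 2 * k + 1 := by
  simp [Nat.pairSwap]

theorem Nat.pairSwap_two_mul_add_one (k : ℕ) : (2 * k + 1).pairSwap = 2 * k := by
  simp [Nat.pairSwap]

theorem Nat.pairSwap_involutive : Involutive Nat.pairSwap := by
  intro n
  obtain ⟨k, rfl | rfl⟩ := n.even_or_odd'
  · rw [Nat.pairSwap_two_mul, Nat.pairSwap_two_mul_add_one]
  · rw [Nat.pairSwap_two_mul_add_one, Nat.pairSwap_two_mul]

theorem Nat.even_pairSwap (n : ℕ) : Even n.pairSwap ↔ ¬ Even n := by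
  obtain ⟨k, rfl | rfl⟩ := n.even_or_odd'
  · simp [Nat.pairSwap_two_mul]
  · simp [Nat.pairSwap_two_mul_add_one]

namespace lp

variable {𝕜 E : Type*} [NontriviallyNormedField 𝕜] [NormedAddCommGroup E] [NormedSpace 𝕜 E]
  {p : ℝ≥0∞} [Fact (1 ≤ p)]

/-- `(a, b) ↦ (-b, a)` on each pair of coordinates `(2k, 2k+1)`. -/
def quarterTurnFun (f : ℕ → E) (n : ℕ) : E :=
  if Even n then -f n.pairSwap else f n.pairSwap

theorem norm_quarterTurnFun (f : ℕ → E) (n : ℕ) : ‖quarterTurnFun f n‖ = ‖f n.pairSwap‖ := by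
  unfold quarterTurnFun
  split_ifs <;> simp

theorem quarterTurnFun_quarterTurnFun (f : ℕ → E) : quarterTurnFun (quarterTurnFun f) = -f := by
  ext n
  by_cases hn : Even n <;>
    simp [quarterTurnFun, hn, Nat.even_pairSwap, Nat.pairSwap_involutive n]

theorem quarterTurnFun_add (f g : ℕ → E) :
    quarterTurnFun (f + g) = quarterTurnFun f + quarterTurnFun g := by
  ext n
  by_cases hn : Even n <;> simp [quarterTurnFun, hn, add_comm]

theorem quarterTurnFun_smul (c : 𝕜) (f : ℕ → E) :
    quarterTurnFun (c • f) = c • quarterTurnFun f := by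
  ext n
  by_cases hn : Even n <;> simp [quarterTurnFun, hn]

noncomputable def quarterTurn : lp (fun _ : ℕ => E) p →L[𝕜] lp (fun _ : ℕ => E) p :=
  LinearMap.mkContinuous
    { toFun := fun f => ⟨quarterTurnFun f, ((lp.memℓp f).comp_injective
          Nat.pairSwap_involutive.injective).mono' fun n => (norm_quarterTurnFun f n).le⟩
      map_add' := fun f g => Subtype.ext (quarterTurnFun_add (⇑f) (⇑g))
      map_smul' := fun c f => Subtype.ext (quarterTurnFun_smul c (⇑f)) }
    1 fun f => by
      rw [one_mul]
      exact norm_le_of_forall_norm_le_comp Nat.pairSwap_involutive.injective fun n =>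
        (norm_quarterTurnFun f n).le

theorem coe_quarterTurn (f : lp (fun _ : ℕ => E) p) :
    ⇑(quarterTurn (𝕜 := 𝕜) f) = quarterTurnFun f :=
  rfl

theorem quarterTurn_mul_self :
    (quarterTurn : lp (fun _ : ℕ => E) p →L[𝕜] _) * quarterTurn = -1 := by
  ext f n
  simp [coe_quarterTurn, quarterTurnFun_quarterTurnFun]

theorem norm_quarterTurn_le : ‖(quarterTurn : lp (fun _ : ℕ => E) p →L[𝕜] _)‖ ≤ 1 :=
  LinearMap.mkContinuous_norm_le _ zero_le_one _

end lp

namespace PiLp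

variable {ι E : Type*} [Fintype ι] [SeminormedAddCommGroup E] {p : ℝ≥0∞} [Fact (1 ≤ p)]

theorem norm_le_norm_of_forall_norm_apply_le {x y : PiLp p fun _ : ι => E}
    (h : ∀ i, ‖y i‖ ≤ ‖x i‖) : ‖y‖ ≤ ‖x‖ := by
  rcases p.dichotomy with rfl | hp
  · simp_rw [norm_eq_ciSup]
    exact ciSup_mono (Set.finite_range _).bddAbove h
  · have hp : 0 < p.toReal := zero_lt_one.trans_le hp
    simp only [norm_eq_sum hp]
    gcongr with i
    exact h i

theorem norm_le_norm_of_forall_norm_apply_le_perm (σ : Equiv.Perm ι)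
    {x y : PiLp p fun _ : ι => E} (h : ∀ i, ‖y i‖ ≤ ‖x (σ i)‖) : ‖y‖ ≤ ‖x‖ :=
  calc ‖y‖ ≤ ‖LinearIsometryEquiv.piLpCongrLeft p ℤ E σ.symm x‖ :=
        norm_le_norm_of_forall_norm_apply_le fun i => by simpa using h i
    _ = ‖x‖ := LinearIsometryEquiv.norm_map _ x

end PiLp

section ThreeCopies

variable {E : Type*} [NormedAddCommGroup E] [NormedSpace ℝ E] {p : ℝ≥0∞}

local notation "F" => PiLp p fun _ : Fin 3 => E

noncomputable def planeTurn : F →L[ℝ] F :=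
  (PiLp.continuousLinearEquiv p ℝ _).symm.toContinuousLinearMap.comp
    (ContinuousLinearMap.pi ![0, PiLp.proj p _ 2, -PiLp.proj p _ 1])

noncomputable def lastTurn (J : E →L[ℝ] E) : F →L[ℝ] F :=
  (PiLp.continuousLinearEquiv p ℝ _).symm.toContinuousLinearMap.comp
    (ContinuousLinearMap.pi ![0, 0, J.comp (PiLp.proj p _ 2)])

@[simp] theorem planeTurn_apply (x : F) (i : Fin 3) : planeTurn x i = ![0, x 2, -x 1] i := by
  fin_cases i <;> simp [planeTurn]

@[simp] theorem lastTurn_apply (J : E →L[ℝ] E) (x : F) (i : Fin 3) :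
    lastTurn J x i = ![0, 0, J (x 2)] i := by
  fin_cases i <;> simp [lastTurn]

variable [Fact (1 ≤ p)] {J : E →L[ℝ] E}

theorem planeTurn_pow_three : (planeTurn : F →L[ℝ] F) ^ 3 = -planeTurn := by
  ext x i
  fin_cases i <;> simp [pow_succ]

theorem lastTurn_pow_three (hJ : J * J = -1) : (lastTurn J : F →L[ℝ] F) ^ 3 = -lastTurn J := by
  have hJJ (y : E) : J (J y) = -y := congrArg (· y) hJ
  ext x i
  fin_cases i <;> simp [pow_succ, hJJ]

theorem rotor_planeTurn_pi_div_two_apply (x : F) (i : Fin 3) :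
    rotor planeTurn (π / 2) x i = ![x 0, x 2, -x 1] i := by
  fin_cases i <;> simp [rotor_pi_div_two, sq]

theorem rotor_lastTurn_pi_apply (hJ : J * J = -1) (x : F) (i : Fin 3) :
    rotor (lastTurn J) π x i = ![x 0, x 1, -x 2] i := by
  have hJJ (y : E) : J (J y) = -y := congrArg (· y) hJ
  fin_cases i <;> simp [rotor_pi, sq, hJJ, two_smul]

theorem norm_planeTurn_le : ‖(planeTurn : F →L[ℝ] F)‖ ≤ 1 := by
  refine ContinuousLinearMap.opNorm_le_bound _ zero_le_one fun x => ?_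
  rw [one_mul]
  refine PiLp.norm_le_norm_of_forall_norm_apply_le_perm (Equiv.swap 1 2) fun i => ?_
  fin_cases i <;> simp [Equiv.swap_apply_of_ne_of_ne]

theorem one_add_smul_planeTurn_sq_apply (c : ℝ) (x : F) (i : Fin 3) :
    (1 + (1 - c) • planeTurn ^ 2 : F →L[ℝ] F) x i = ![x 0, c • x 1, c • x 2] i := by
  fin_cases i <;> simp [sq] <;> module

theorem one_add_smul_lastTurn_sq_apply (hJ : J * J = -1) (c : ℝ) (x : F) (i : Fin 3) :
    (1 + (1 - c) • lastTurn J ^ 2 : F →L[ℝ] F) x i = ![x 0, x 1, c • x 2] i := by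
  have hJJ (y : E) : J (J y) = -y := congrArg (· y) hJ
  fin_cases i <;> simp [sq, hJJ]
  module

theorem norm_lastTurn_le (hJ : ‖J‖ ≤ 1) : ‖(lastTurn J : F →L[ℝ] F)‖ ≤ 1 := by
  refine ContinuousLinearMap.opNorm_le_bound _ zero_le_one fun x => ?_
  rw [one_mul]
  refine PiLp.norm_le_norm_of_forall_norm_apply_le fun i => ?_
  fin_cases i <;> simp
  exact J.le_of_opNorm_le hJ (x 2) |>.trans_eq (one_mul _)

theorem norm_one_add_smul_planeTurn_sq_le {c : ℝ} (hc : |c| ≤ 1) :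
    ‖1 + (1 - c) • (planeTurn : F →L[ℝ] F) ^ 2‖ ≤ 1 := by
  refine ContinuousLinearMap.opNorm_le_bound _ zero_le_one fun x => ?_
  rw [one_mul]
  refine PiLp.norm_le_norm_of_forall_norm_apply_le fun i => ?_
  rw [one_add_smul_planeTurn_sq_apply]
  fin_cases i <;> simp [norm_smul] <;> exact mul_le_of_le_one_left (norm_nonneg _) hc

theorem norm_one_add_smul_lastTurn_sq_le (hJ : J * J = -1) {c : ℝ} (hc : |c| ≤ 1) :
    ‖1 + (1 - c) • (lastTurn J : F →L[ℝ] F) ^ 2‖ ≤ 1 := by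
  refine ContinuousLinearMap.opNorm_le_bound _ zero_le_one fun x => ?_
  rw [one_mul]
  refine PiLp.norm_le_norm_of_forall_norm_apply_le fun i => ?_
  rw [one_add_smul_lastTurn_sq_apply hJ]
  fin_cases i <;> simp [norm_smul]
  exact mul_le_of_le_one_left (norm_nonneg _) hc

theorem norm_rotor_planeTurn_pi_div_two_le : ‖rotor (planeTurn : F →L[ℝ] F) (π / 2)‖ ≤ 1 := by
  refine ContinuousLinearMap.opNorm_le_bound _ zero_le_one fun x => ?_
  rw [one_mul]
  refine PiLp.norm_le_norm_of_forall_norm_apply_le_perm (Equiv.swap 1 2) fun i => ?_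
  fin_cases i <;> simp [rotor_planeTurn_pi_div_two_apply, Equiv.swap_apply_of_ne_of_ne]

theorem norm_rotor_planeTurn_le (θ : ℝ) : ‖rotor (planeTurn : F →L[ℝ] F) θ‖ ≤ 2 := by
  grw [norm_rotor_le, norm_one_add_smul_planeTurn_sq_le (abs_cos_le_one θ), norm_planeTurn_le]
  norm_num

theorem norm_rotor_lastTurn_le (hJ : J * J = -1) (hJ₁ : ‖J‖ ≤ 1) (θ : ℝ) :
    ‖rotor (lastTurn J : F →L[ℝ] F) θ‖ ≤ 2 := by
  grw [norm_rotor_le, norm_one_add_smul_lastTurn_sq_le hJ (abs_cos_le_one θ),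
    norm_lastTurn_le hJ₁]
  norm_num

variable (p J) in
/-- On `[0, 1/4]` the second factor turns the plane of coordinates `1, 2` by a quarter turn;
on `[1/4, 1/2]` the first one turns the last coordinate by a half turn through `J`. -/
noncomputable def swapPath (hJ : J * J = -1) (τ : ℝ) : F ≃L[ℝ] F :=
  ContinuousLinearEquiv.unitsEquiv ℝ F
    (rotorUnit (lastTurn_pow_three (p := p) hJ) (π * max (4 * τ - 1) 0) *
      rotorUnit (planeTurn_pow_three (p := p) (E := E)) (π / 2 * min (4 * τ) 1))

theorem coe_swapPath (hJ : J * J = -1) (τ : ℝ) : (swapPath p J hJ τ : F →L[ℝ] F) =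
    rotor (lastTurn J) (π * max (4 * τ - 1) 0) * rotor planeTurn (π / 2 * min (4 * τ) 1) :=
  rfl

theorem continuous_swapPath (hJ : J * J = -1) :
    Continuous fun τ => (swapPath p J hJ τ : F →L[ℝ] F) := by
  simp only [coe_swapPath]
  exact ((continuous_rotor _).comp (by fun_prop)).mul ((continuous_rotor _).comp (by fun_prop))

theorem swapPath_zero (hJ : J * J = -1) : swapPath p J hJ 0 = ContinuousLinearEquiv.refl ℝ F := by
  apply ContinuousLinearEquiv.coe_injective
  rw [coe_swapPath, ContinuousLinearEquiv.coe_refl, ← ContinuousLinearMap.one_def]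
  norm_num

theorem swapPath_half_apply (hJ : J * J = -1) (x : F) (i : Fin 3) :
    swapPath p J hJ (1 / 2) x i = ![x 0, x 2, x 1] i := by
  have h : (swapPath p J hJ (1 / 2) : F →L[ℝ] F) =
      rotor (lastTurn J) π * rotor planeTurn (π / 2) := by
    rw [coe_swapPath]
    norm_num
  change (swapPath p J hJ (1 / 2) : F →L[ℝ] F) x i = _
  rw [h, mul_apply_eq_comp]
  fin_cases i <;> simp [rotor_lastTurn_pi_apply hJ, rotor_planeTurn_pi_div_two_apply]

theorem norm_swapPath_le (hJ : J * J = -1) (hJ₁ : ‖J‖ ≤ 1) (τ : ℝ) :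
    ‖(swapPath p J hJ τ : F →L[ℝ] F)‖ ≤ 2 := by
  rw [coe_swapPath]
  rcases le_total τ (1 / 4) with hτ | hτ
  · rw [max_eq_right (by linarith), mul_zero, rotor_zero, one_mul]
    exact norm_rotor_planeTurn_le _
  · rw [min_eq_right (by linarith), mul_one]
    calc _ ≤ 2 * 1 := norm_mul_le_of_le (norm_rotor_lastTurn_le hJ hJ₁ _)
            norm_rotor_planeTurn_pi_div_two_le
      _ = 2 := mul_one 2

end ThreeCopies

/-- There is a continuous path `τ ↦ V_τ`, `0 ≤ τ ≤ 1/2`, of invertible bounded linear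
operators on `(ℓ_q ⊕ ℓ_q ⊕ ℓ_q)_q` with `V_0 = id`, `V_{1/2}(u,v,w) = (u,w,v)`, and
`‖V_τ‖ ≤ 2` for all `τ`. -/
theorem exists_path_of_invertibles (q : ℝ) (hq : 1 ≤ q) :
    ∃ V : ℝ → (tripleSum q hq ≃L[ℝ] tripleSum q hq),
      ContinuousOn (fun τ => (V τ : tripleSum q hq →L[ℝ] tripleSum q hq))
        (Set.Icc 0 (1/2)) ∧
      V 0 = ContinuousLinearEquiv.refl ℝ (tripleSum q hq) ∧
      (∀ x : tripleSum q hq,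
        (WithLp.ofLp (p := ENNReal.ofReal q) (V (1/2) x) : Fin 3 → lpSeq q hq) 0 = (WithLp.ofLp (p := ENNReal.ofReal q) x : Fin 3 → lpSeq q hq) 0 ∧
        (WithLp.ofLp (p := ENNReal.ofReal q) (V (1/2) x) : Fin 3 → lpSeq q hq) 1 = (WithLp.ofLp (p := ENNReal.ofReal q) x : Fin 3 → lpSeq q hq) 2 ∧
        (WithLp.ofLp (p := ENNReal.ofReal q) (V (1/2) x) : Fin 3 → lpSeq q hq) 2 = (WithLp.ofLp (p := ENNReal.ofReal q) x : Fin 3 → lpSeq q hq) 1) ∧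
      ∀ τ ∈ Set.Icc (0:ℝ) (1/2),
        ‖(V τ : tripleSum q hq →L[ℝ] tripleSum q hq)‖ ≤ 2 := by
  have : Fact (1 ≤ ENNReal.ofReal q) := ⟨by simpa using ENNReal.ofReal_le_ofReal hq⟩
  have hJ := lp.quarterTurn_mul_self (𝕜 := ℝ) (E := ℝ) (p := ENNReal.ofReal q)
  refine ⟨swapPath _ lp.quarterTurn hJ, (continuous_swapPath hJ).continuousOn, swapPath_zero hJ,
    fun x => ?_, fun τ _ => norm_swapPath_le hJ lp.norm_quarterTurn_le τ⟩
  exact ⟨swapPath_half_apply hJ x 0, swapPath_half_apply hJ x 1, swapPath_half_apply hJ x 2⟩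
end
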